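/- Let A be an alphabet with at least two letters, a ∈ A, B = A \ {a}, r ≥ 1, k ≥ 1. Then the language Count(a^r, k) = { v : |v|_{a^r} = k } equals [ε ∪ (Count(a^r,0) · B)] · CountPS(a^r, k) · [(B · Count(a^r,0)) ∪ ε]. -/

import Mathlib

/-!
A letter `b ≠ a` cannot lie inside an occurrence of `aʳ`, so it cuts a word into two parts
whose occurrence counts add up. A word with `k ≥ 1` occurrences is cut just before its first
and just after its last occurrence: the neighbouring letters differ from `a`, since otherwise
the occurrence could be shifted by one position, and the outer parts contain no occurrence.
-/

/-- Number of occurrences of `w` as a contiguous subword (factor) of `v`. -/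
def countOcc {α : Type*} [DecidableEq α] (w v : List α) : ℕ :=
  ((List.range (v.length + 1)).filter (fun i => decide (w <+: v.drop i))).length

/-- `Count w k`: words containing exactly `k` occurrences of `w` as a factor. -/
def Count {α : Type*} [DecidableEq α] (w : List α) (k : ℕ) : Language α :=
  {v | countOcc w v = k}

/-- `CountPS w k`: words with exactly `k` occurrences of `w` as a factor,
having `w` both as a prefix and as a suffix. -/
def CountPS {α : Type*} [DecidableEq α] (w : List α) (k : ℕ) : Language α :=
  {v | countOcc w v = k ∧ w <+: v ∧ w <:+ v}

/-- The language of single letters distinct from `a` (the buffers). -/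
def buffer {α : Type*} (a : α) : Language α := {l | ∃ b : α, b ≠ a ∧ l = [b]}

/-- The wedge language `W = B ⊔ B·Count(aʳ,0)·B`. -/
def wedge {α : Type*} [DecidableEq α] (a : α) (r : ℕ) : Language α :=
  buffer a ⊔ buffer a * Count (List.replicate r a) 0 * buffer a

/-- `altLang a W [k₁,…,k_j]` is the language `a^{k₁} W a^{k₂} W ⋯ W a^{k_j}`. -/
def altLang {α : Type*} (a : α) (W : Language α) : List ℕ → Language α
  | [] => 1
  | [k] => {List.replicate k a}
  | k :: ks => ({List.replicate k a} : Language α) * W * altLang a W ks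

lemma replicate_append_cons_self {α : Type*} (r : ℕ) (a : α) (t : List α) :
    List.replicate r a ++ a :: t = a :: (List.replicate r a ++ t) := by
  rw [← List.singleton_append, ← List.append_assoc, ← List.replicate_succ',
    List.replicate_succ, List.cons_append]

section Occurrences

variable {α : Type*} [DecidableEq α] {w : List α}

lemma mem_count {v : List α} {k : ℕ} : v ∈ Count w k ↔ countOcc w v = k := Iff.rfl

lemma countOcc_nil (w : List α) : countOcc w [] = if w = [] then 1 else 0 := by
  by_cases hw : w = [] <;> simp [countOcc, List.prefix_nil, hw]

lemma countOcc_cons (w : List α) (c : α) (v : List α) :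
    countOcc w (c :: v) = (if w <+: c :: v then 1 else 0) + countOcc w v := by
  simp only [countOcc, List.length_cons]
  rw [List.range_succ_eq_map, List.filter_cons]
  by_cases h : w <+: c :: v <;>
    simp [h, List.filter_map, Function.comp_def, Nat.add_comm]

lemma countOcc_ne_zero_of_prefix {v : List α} (h : w <+: v) : countOcc w v ≠ 0 := by
  cases v with
  | nil => simp [countOcc_nil, List.prefix_nil.mp h]
  | cons c v => simp [countOcc_cons, h]

lemma countOcc_le_of_suffix {t v : List α} (h : t <:+ v) : countOcc w t ≤ countOcc w v := by
  obtain ⟨u, rfl⟩ := h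
  induction u with
  | nil => rfl
  | cons c u ih => rw [List.cons_append, countOcc_cons]; omega

lemma prefix_append_cons_iff {c : α} (hc : c ∉ w) (u v : List α) :
    w <+: u ++ c :: v ↔ w <+: u := by
  refine ⟨fun h => ?_, fun h => h.trans (List.prefix_append u _)⟩
  by_contra hu
  have hlen : (u ++ [c]).length ≤ w.length := by
    have := mt (List.prefix_of_prefix_length_le h (List.prefix_append u (c :: v))) hu
    simp only [List.length_append, List.length_singleton]
    omega
  have huc : u ++ [c] <+: w := List.prefix_of_prefix_length_le (by simp) h hlen
  exact hc (huc.subset (by simp))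

lemma countOcc_append_cons {c : α} (hc : c ∉ w) (u v : List α) :
    countOcc w (u ++ c :: v) = countOcc w u + countOcc w v := by
  induction u with
  | nil =>
    have := prefix_append_cons_iff hc [] v
    simp only [List.nil_append, List.prefix_nil] at this
    rw [List.nil_append, countOcc_cons, countOcc_nil]
    simp only [this]
  | cons d u ih =>
    rw [List.cons_append, countOcc_cons, countOcc_cons, ih, ← List.cons_append]
    simp only [prefix_append_cons_iff hc (d :: u) v]
    ring

end Occurrences

section Buffers

variable {α : Type*} {a : α} {L : Language α}

lemma mem_one_sup_mul_buffer {x : List α} :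
    x ∈ 1 ⊔ L * buffer a ↔ x = [] ∨ ∃ q ∈ L, ∃ b ≠ a, x = q ++ [b] := by
  change x ∈ 1 + L * buffer a ↔ _
  simp only [Language.mem_add, Language.mem_one, buffer]
  constructor
  · rintro (h | ⟨q, hq, _, ⟨b, hb, rfl⟩, rfl⟩)
    exacts [.inl h, .inr ⟨q, hq, b, hb, rfl⟩]
  · rintro (h | ⟨q, hq, b, hb, rfl⟩)
    exacts [.inl h, .inr ⟨q, hq, [b], ⟨b, hb, rfl⟩, rfl⟩]

lemma mem_buffer_mul_sup_one {s : List α} :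
    s ∈ buffer a * L ⊔ 1 ↔ s = [] ∨ ∃ b ≠ a, ∃ t ∈ L, s = b :: t := by
  change s ∈ buffer a * L + 1 ↔ _
  simp only [Language.mem_add, Language.mem_one, buffer]
  constructor
  · rintro (⟨_, ⟨b, hb, rfl⟩, t, ht, rfl⟩ | h)
    exacts [.inr ⟨b, hb, t, ht, rfl⟩, .inl h]
  · rintro (h | ⟨b, hb, t, ht, rfl⟩)
    exacts [.inr h, .inl ⟨[b], ⟨b, hb, rfl⟩, t, ht, rfl⟩]

end Buffers

section Replicate

open List

variable {α : Type*} [DecidableEq α] {a : α} {r : ℕ}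

lemma countOcc_append_of_mem_left {x : List α}
    (hx : x ∈ 1 ⊔ Count (replicate r a) 0 * buffer a) (y : List α) :
    countOcc (replicate r a) (x ++ y) = countOcc (replicate r a) y := by
  obtain rfl | ⟨q, hq, b, hb, rfl⟩ := mem_one_sup_mul_buffer.mp hx
  · rfl
  · rw [append_assoc, singleton_append,
      countOcc_append_cons (fun h => hb (eq_of_mem_replicate h)), mem_count.mp hq, zero_add]

lemma countOcc_append_of_mem_right {s : List α}
    (hs : s ∈ buffer a * Count (replicate r a) 0 ⊔ 1) (y : List α) :
    countOcc (replicate r a) (y ++ s) = countOcc (replicate r a) y := by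
  obtain rfl | ⟨b, hb, t, ht, rfl⟩ := mem_buffer_mul_sup_one.mp hs
  · rw [append_nil]
  · rw [countOcc_append_cons (fun h => hb (eq_of_mem_replicate h)), mem_count.mp ht, add_zero]

lemma exists_left_factorization {v : List α} (hv : countOcc (replicate r a) v ≠ 0) :
    ∃ x ∈ 1 ⊔ Count (replicate r a) 0 * buffer a, ∃ y, replicate r a <+: y ∧ v = x ++ y := by
  induction v with
  | nil =>
    have hw : replicate r a = [] := by simpa [countOcc_nil] using hv
    exact ⟨[], mem_one_sup_mul_buffer.mpr (.inl rfl), [], by rw [hw], rfl⟩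
  | cons c v ih =>
    by_cases hpre : replicate r a <+: c :: v
    · exact ⟨[], mem_one_sup_mul_buffer.mpr (.inl rfl), c :: v, hpre, rfl⟩
    rw [countOcc_cons, if_neg hpre, zero_add] at hv
    obtain ⟨x, hx, y, hy, rfl⟩ := ih hv
    refine ⟨c :: x, mem_one_sup_mul_buffer.mpr (.inr ?_), y, hy, rfl⟩
    obtain rfl | ⟨q, hq, b, hb, rfl⟩ := mem_one_sup_mul_buffer.mp hx
    · refine ⟨[], ?_, c, ?_, rfl⟩
      · rw [mem_count, countOcc_nil, if_neg fun h => hpre (by rw [h]; exact nil_prefix)]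
      · rintro rfl
        obtain ⟨t, rfl⟩ := hy
        exact hpre ⟨c :: t, replicate_append_cons_self r c t⟩
    · have hq' : ¬ replicate r a <+: c :: q := fun h => hpre (h.trans (by simp))
      exact ⟨c :: q, by rw [mem_count, countOcc_cons, if_neg hq', mem_count.mp hq], b, hb, rfl⟩

lemma exists_right_factorization {v : List α} (hv : countOcc (replicate r a) v ≠ 0) :
    ∃ m s, replicate r a <:+ m ∧ s ∈ buffer a * Count (replicate r a) 0 ⊔ 1 ∧ v = m ++ s := by
  induction v with
  | nil =>
    have hw : replicate r a = [] := by simpa [countOcc_nil] using hv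
    exact ⟨[], [], by rw [hw], mem_buffer_mul_sup_one.mpr (.inl rfl), rfl⟩
  | cons c v ih =>
    by_cases hv' : countOcc (replicate r a) v = 0
    · have hpre : replicate r a <+: c :: v := by
        by_contra h
        rw [countOcc_cons, if_neg h, hv'] at hv
        exact hv rfl
      obtain ⟨s, hs⟩ := hpre
      refine ⟨replicate r a, s, suffix_refl _, mem_buffer_mul_sup_one.mpr ?_, hs.symm⟩
      rcases s with _ | ⟨b, t⟩
      · exact .inl rfl
      refine .inr ⟨b, ?_, t, ?_, rfl⟩
      · rintro rfl
        rw [replicate_append_cons_self, cons.injEq] at hs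
        exact countOcc_ne_zero_of_prefix (hs.2 ▸ prefix_append _ _) hv'
      · have hw : replicate r a ≠ [] := fun h =>
          countOcc_ne_zero_of_prefix (by rw [h]; exact nil_prefix) hv'
        obtain ⟨w₀, w', hw⟩ := exists_cons_of_ne_nil hw
        rw [hw, cons_append, cons.injEq] at hs
        have ht : t <:+ v := hs.2 ▸ (suffix_cons b t).trans (suffix_append w' _)
        exact Nat.eq_zero_of_le_zero (hv' ▸ countOcc_le_of_suffix ht)
    · obtain ⟨m, s, hm, hs, rfl⟩ := ih hv'
      exact ⟨c :: m, s, hm.trans (suffix_cons c m), hs, rfl⟩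

end Replicate

theorem stmt9_general {α : Type*} [DecidableEq α] (a : α)
    (r k : ℕ) (hk : 1 ≤ k) :
    Count (List.replicate r a) k
      = (1 ⊔ Count (List.replicate r a) 0 * buffer a)
          * CountPS (List.replicate r a) k
          * (buffer a * Count (List.replicate r a) 0 ⊔ 1) := by
  ext v
  constructor
  · intro hv
    have hv0 : countOcc (List.replicate r a) v ≠ 0 := by rw [mem_count.mp hv]; omega
    obtain ⟨x, hx, y, hwy, rfl⟩ := exists_left_factorization hv0
    have hy : countOcc (List.replicate r a) y = k := by
      rwa [mem_count, countOcc_append_of_mem_left hx] at hv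
    have hy0 : countOcc (List.replicate r a) y ≠ 0 := by omega
    obtain ⟨m, s, hwm, hs, rfl⟩ := exists_right_factorization hy0
    have hm : countOcc (List.replicate r a) m = k := by rwa [countOcc_append_of_mem_right hs] at hy
    have hwm' : List.replicate r a <+: m :=
      List.prefix_of_prefix_length_le hwy (List.prefix_append m s) hwm.length_le
    exact ⟨x ++ m, ⟨x, hx, m, ⟨hm, hwm', hwm⟩, rfl⟩, s, hs, List.append_assoc _ _ _⟩
  · rintro ⟨_, ⟨x, hx, m, hm, rfl⟩, s, hs, rfl⟩
    change countOcc _ (x ++ m ++ s) = k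
    rw [List.append_assoc, countOcc_append_of_mem_left hx,
      countOcc_append_of_mem_right hs]
    exact hm.1

theorem stmt9 {α : Type*} [DecidableEq α] (a : α) (hA : ∃ b : α, b ≠ a)
    (r k : ℕ) (hr : 1 ≤ r) (hk : 1 ≤ k) :
    Count (List.replicate r a) k
      = (1 ⊔ Count (List.replicate r a) 0 * buffer a)
          * CountPS (List.replicate r a) k
          * (buffer a * Count (List.replicate r a) 0 ⊔ 1) :=
  stmt9_general a r k hk
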